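/- arXiv:2208.11051 — 3 statements merged into one kernel-verified Lean document; each statement's English description precedes it below -/
import Mathlib

section
/- Let A be a symmetric positive semidefinite n×n real matrix, f̂ : ℝ → ℝ, and u₀^(s) = f̂(√A)·e_s for standard basis vectors e_s. Define u^(s)(t) = cos(t√A)·u₀^(s) and the data entries D_j^{(r,s)} = ⟨e_r, cos(jτ√A)·f̂(√A)²·e_s⟩ (with F̂ = f̂²). Then the Galerkin mass matrix entries M_{i,j}^{(r,s)} = ⟨u^(r)(iτ), u^(s)(jτ)⟩ satisfy M_{i,j}^{(r,s)} = (1/2)·(D_{i+j}^{(r,s)} + D_{|i−j|}^{(r,s)}). -/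
open Matrix

/-- `f(A)` for a real symmetric matrix `A`, via the spectral decomposition
`A = Q diag(θⱼ) Qᵀ`, `f(A) = Q diag(f(θⱼ)) Qᵀ`. -/
noncomputable def matFun {n : Type*} [Fintype n] [DecidableEq n] (A : Matrix n n ℝ)
    (hA : A.IsHermitian) (f : ℝ → ℝ) : Matrix n n ℝ :=
  (hA.eigenvectorUnitary : Matrix n n ℝ) * Matrix.diagonal (fun i => f (hA.eigenvalues i)) *
    star (hA.eigenvectorUnitary : Matrix n n ℝ)

/-- `cos(t·√A)` for a real symmetric (positive semidefinite) matrix `A`. -/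
noncomputable def matCos {n : Type*} [Fintype n] [DecidableEq n] (A : Matrix n n ℝ)
    (hA : A.IsHermitian) (t : ℝ) : Matrix n n ℝ :=
  matFun A hA (fun θ => Real.cos (t * Real.sqrt θ))

lemma matFun_mul {n : Type*} [Fintype n] [DecidableEq n] {A : Matrix n n ℝ}
    (hA : A.IsHermitian) (f g : ℝ → ℝ) :
    matFun A hA f * matFun A hA g = matFun A hA (fun θ => f θ * g θ) := by
  unfold matFun
  have h1 : star (hA.eigenvectorUnitary : Matrix n n ℝ) * (hA.eigenvectorUnitary : Matrix n n ℝ) = 1 :=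
    Matrix.UnitaryGroup.star_mul_self _
  calc (hA.eigenvectorUnitary : Matrix n n ℝ) * Matrix.diagonal (fun i => f (hA.eigenvalues i)) *
      star (hA.eigenvectorUnitary : Matrix n n ℝ) *
      ((hA.eigenvectorUnitary : Matrix n n ℝ) * Matrix.diagonal (fun i => g (hA.eigenvalues i)) *
      star (hA.eigenvectorUnitary : Matrix n n ℝ))
      = (hA.eigenvectorUnitary : Matrix n n ℝ) * (Matrix.diagonal (fun i => f (hA.eigenvalues i)) *
        ((star (hA.eigenvectorUnitary : Matrix n n ℝ) * (hA.eigenvectorUnitary : Matrix n n ℝ)) *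
        Matrix.diagonal (fun i => g (hA.eigenvalues i)))) *
        star (hA.eigenvectorUnitary : Matrix n n ℝ) := by simp only [Matrix.mul_assoc]
    _ = _ := by rw [h1, one_mul, diagonal_mul_diagonal]

lemma matFun_transpose {n : Type*} [Fintype n] [DecidableEq n] {A : Matrix n n ℝ}
    (hA : A.IsHermitian) (f : ℝ → ℝ) :
    (matFun A hA f)ᵀ = matFun A hA f := by
  unfold matFun
  have : star (hA.eigenvectorUnitary : Matrix n n ℝ) = (hA.eigenvectorUnitary : Matrix n n ℝ)ᵀ := by
    ext i j; simp [star_eq_conjTranspose, conjTranspose]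
  simp [this, transpose_mul, diagonal_transpose, Matrix.mul_assoc]

lemma matFun_congr {n : Type*} [Fintype n] [DecidableEq n] {A : Matrix n n ℝ}
    (hA : A.IsHermitian) {f g : ℝ → ℝ} (h : ∀ θ, f θ = g θ) :
    matFun A hA f = matFun A hA g := by
  have he : (fun i => f (hA.eigenvalues i)) = fun i => g (hA.eigenvalues i) :=
    funext fun i => h _
  unfold matFun; rw [he]

lemma coskey (i j : ℕ) (c : ℝ) (hc : 0 ≤ c) :
    Real.cos ((i:ℝ) * c) * Real.cos ((j:ℝ) * c) =
      1/2 * (Real.cos (((i + j : ℕ) : ℝ) * c) +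
        Real.cos (((((i:ℤ) - (j:ℤ)).natAbs : ℕ) : ℝ) * c)) := by
  have h1 : (((((i:ℤ) - (j:ℤ)).natAbs : ℕ)) : ℝ) * c = |((i:ℝ) - (j:ℝ)) * c| := by
    rw [abs_mul, abs_of_nonneg hc]
    congr 1
    rw [Nat.cast_natAbs]
    push_cast
    ring
  rw [h1, Real.cos_abs]
  push_cast
  rw [add_mul, sub_mul, Real.cos_add, Real.cos_sub]
  ring

lemma matFun_add {n : Type*} [Fintype n] [DecidableEq n] {A : Matrix n n ℝ}
    (hA : A.IsHermitian) (f g : ℝ → ℝ) :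
    matFun A hA f + matFun A hA g = matFun A hA (fun θ => f θ + g θ) := by
  unfold matFun
  rw [← Matrix.add_mul, ← Matrix.mul_add, diagonal_add]

lemma matFun_smul {n : Type*} [Fintype n] [DecidableEq n] {A : Matrix n n ℝ}
    (hA : A.IsHermitian) (c : ℝ) (f : ℝ → ℝ) :
    c • matFun A hA f = matFun A hA (fun θ => c * f θ) := by
  unfold matFun
  symm
  rw [show (fun i => c * f (hA.eigenvalues i)) = c • fun i => f (hA.eigenvalues i) from rfl,
    Matrix.diagonal_smul, Matrix.mul_smul, Matrix.smul_mul]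

/-- Data-driven computation of the Galerkin mass matrix: with `u₀^(s) = f̂(√A)·e_s`,
`u^(s)(t) = cos(t√A)·u₀^(s)` and data `D_j^{(r,s)} = ⟨e_r, cos(jτ√A)·f̂(√A)²·e_s⟩`,
the mass matrix entries `M_{i,j}^{(r,s)} = ⟨u^(r)(iτ), u^(s)(jτ)⟩` satisfy
`M_{i,j}^{(r,s)} = (1/2)(D_{i+j}^{(r,s)} + D_{|i−j|}^{(r,s)})`. -/
theorem mass_matrix_from_data {n : Type*} [Fintype n] [DecidableEq n]
    (A : Matrix n n ℝ) (hA : A.IsHermitian) (hpsd : A.PosSemidef)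
    (τ : ℝ) (hτ : 0 < τ) (fhat : ℝ → ℝ)
    (B : Matrix n n ℝ) (hB : B = matFun A hA (fun θ => fhat (Real.sqrt θ)))
    (u : n → ℝ → (n → ℝ))
    (hu : ∀ (s : n) (t : ℝ), u s t = (matCos A hA t).mulVec (B.mulVec (Pi.single s 1)))
    (D : ℕ → n → n → ℝ)
    (hD : ∀ (j : ℕ) (r s : n),
      D j r s = Pi.single r 1 ⬝ᵥ ((matCos A hA ((j : ℝ) * τ)) * (B * B)).mulVec (Pi.single s 1))
    (M : ℕ → ℕ → n → n → ℝ)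
    (hM : ∀ (i j : ℕ) (r s : n), M i j r s = u r ((i : ℝ) * τ) ⬝ᵥ u s ((j : ℝ) * τ)) :
    ∀ (i j : ℕ) (r s : n),
      M i j r s = (1 / 2) * (D (i + j) r s + D ((i : ℤ) - (j : ℤ)).natAbs r s) := by
  intro i j r s
  -- dot product rearrangement
  have key : ∀ (X Y : Matrix n n ℝ) (x y : n → ℝ),
      X.mulVec x ⬝ᵥ Y.mulVec y = x ⬝ᵥ (Xᵀ * Y).mulVec y := by
    intro X Y x y
    symm
    rw [← mulVec_mulVec, dotProduct_mulVec, vecMul_transpose]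
  have hBt : Bᵀ = B := by rw [hB]; exact matFun_transpose hA _
  -- the core matrix identity
  have hmat : B * ((matCos A hA ((i:ℝ)*τ) * matCos A hA ((j:ℝ)*τ)) * B) =
      (1/2 : ℝ) • (matCos A hA (((i+j : ℕ):ℝ)*τ) * (B * B)) +
      (1/2 : ℝ) • (matCos A hA (((((i:ℤ)-(j:ℤ)).natAbs : ℕ):ℝ)*τ) * (B * B)) := by
    rw [hB]
    unfold matCos
    rw [matFun_mul, matFun_mul, matFun_mul, matFun_mul, matFun_mul, matFun_mul]
    rw [matFun_smul, matFun_smul, matFun_add]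
    apply matFun_congr
    intro θ
    have hc : (0:ℝ) ≤ τ * Real.sqrt θ := mul_nonneg hτ.le (Real.sqrt_nonneg θ)
    rw [mul_assoc ((i:ℝ)) τ, mul_assoc ((j:ℝ)) τ, mul_assoc (((i+j : ℕ)):ℝ) τ,
      mul_assoc (((((i:ℤ)-(j:ℤ)).natAbs : ℕ)):ℝ) τ, coskey i j _ hc]
    ring
  have hCt : ∀ t : ℝ, (matCos A hA t)ᵀ = matCos A hA t := fun t => matFun_transpose hA _
  rw [hM, hu, hu, mulVec_mulVec, mulVec_mulVec, key, transpose_mul, hBt, hCt]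
  have hassoc : B * matCos A hA ((i:ℝ)*τ) * (matCos A hA ((j:ℝ)*τ) * B) =
      B * ((matCos A hA ((i:ℝ)*τ) * matCos A hA ((j:ℝ)*τ)) * B) := by
    simp only [Matrix.mul_assoc]
  rw [hassoc, hmat, hD, hD]
  simp only [Matrix.add_mulVec, Matrix.smul_mulVec, dotProduct_add, dotProduct_smul,
    smul_eq_mul]
  ring
end

section
/- Given data D_j = M_{0,j} where M is the Gram matrix of snapshots u₀,…,u_{n−1} satisfying M_{i,j} = (1/2)(D_{i+j} + D_{|i−j|}) (blockwise), the ROM-estimated snapshots ũⱼ = V_ref·R·eⱼ satisfy both data-fit relations: (i) ∫ ũ₀ᵀ ũⱼ = D_j for j = 0,…,n−1, and (ii) 2·∫ ũ_{n−1}ᵀ ũⱼ = D_{j+n−1} + D_{n−1−j} for j = 0,…,n−1. -/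
open Matrix

/-- Proposition 3.2 (both data-fit relations), blockwise: let `uⱼ ∈ ℝ^{N×m}` be block
snapshots with positive definite Gram matrix `M` (blocks `M_{i,j} = uᵢᵀuⱼ`), block Cholesky
factor `R` (`M = RᵀR`), `V_ref` with orthonormal columns, `eⱼ` the block columns of the
identity, `ũⱼ = V_ref·R·eⱼ`, and data `D_j` with `M_{i,j} = (1/2)(D_{i+j} + D_{|i−j|})`.
Then (i) `ũ₀ᵀũⱼ = D_j` and (ii) `2·ũ_{n−1}ᵀũⱼ = D_{j+n−1} + D_{n−1−j}` for `j = 0,…,n−1`. -/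
theorem rom_data_fit_blocks {n m N N' : ℕ} (hn : 0 < n)
    (u : Fin n → Matrix (Fin N) (Fin m) ℝ)
    (M : Matrix (Fin n × Fin m) (Fin n × Fin m) ℝ)
    (hMblock : ∀ (i j : Fin n) (a b : Fin m), M (i, a) (j, b) = ((u i)ᵀ * u j) a b)
    (hMpd : M.PosDef)
    (R : Matrix (Fin n × Fin m) (Fin n × Fin m) ℝ) (hR : M = Rᵀ * R)
    (Vref : Matrix (Fin N') (Fin n × Fin m) ℝ) (hVref : Vrefᵀ * Vref = 1)
    (e : Fin n → Matrix (Fin n × Fin m) (Fin m) ℝ)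
    (he : ∀ (j : Fin n) (p : Fin n × Fin m) (b : Fin m),
      e j p b = if p = (j, b) then 1 else 0)
    (ut : Fin n → Matrix (Fin N') (Fin m) ℝ) (hut : ∀ j, ut j = Vref * R * e j)
    (D : ℕ → Matrix (Fin m) (Fin m) ℝ)
    (hD : ∀ i j : Fin n, (Matrix.of fun a b => M (i, a) (j, b)) =
      ((1 : ℝ) / 2) • (D (i.1 + j.1) + D (((i.1 : ℤ) - (j.1 : ℤ)).natAbs))) :
    ∀ j : Fin n,
      (ut ⟨0, hn⟩)ᵀ * ut j = D j.1 ∧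
        (2 : ℝ) • ((ut ⟨n - 1, by omega⟩)ᵀ * ut j) = D (j.1 + (n - 1)) + D (n - 1 - j.1) := by
  have key : ∀ i j : Fin n, (ut i)ᵀ * ut j = Matrix.of fun a b => M (i, a) (j, b) := by
    intro i j
    have h1 : (ut i)ᵀ * ut j = (e i)ᵀ * M * e j := by
      have hv : Vrefᵀ * (Vref * (R * e j)) = R * e j := by
        rw [← Matrix.mul_assoc, hVref, Matrix.one_mul]
      rw [hut, hut, hR]
      simp only [Matrix.transpose_mul, Matrix.mul_assoc, hv]
    rw [h1]
    ext a b
    simp only [Matrix.mul_apply, Matrix.transpose_apply, Matrix.of_apply, he]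
    rw [Finset.sum_eq_single ((j, b) : Fin n × Fin m)]
    · simp only [if_pos rfl, mul_one]
      rw [Finset.sum_eq_single ((i, a) : Fin n × Fin m)]
      · simp
      · intro p _ hp; simp [hp]
      · simp
    · intro q _ hq; simp [hq]
    · simp
  intro j
  have hDs := fun i => hD i j
  constructor
  · rw [key, hDs ⟨0, hn⟩]
    ext a b
    have : (((0 : ℤ) - (j.1 : ℤ)).natAbs) = j.1 := by omega
    simp [this]
    ring
  · rw [key, hDs ⟨n - 1, by omega⟩]
    have h1 : (n - 1) + j.1 = j.1 + (n - 1) := by omega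
    have h2 : (((n - 1 : ℕ) : ℤ) - (j.1 : ℤ)).natAbs = n - 1 - j.1 := by omega
    ext a b
    simp [h1, h2]
    ring
end

section
/- Let F be an even real-valued Schwartz function with F̂ even. For θ > 0 define g_θ(t) = (F ⋆ (H·cos(·√θ)))(t) + (F ⋆ (H·cos(·√θ)))(−t) (the even part construction). Then g_θ(t) = F̂(√θ)·cos(t√θ) for all t. -/
/-! Since `F` and `cos` are even, the substitution `s ↦ -s` turns `conv (-t)` into the integral
of `F (t - s) cos (s √θ)` over the negative half-line, so the two Heaviside halves glue to the
full convolution `F ⋆ cos (· √θ)`. Expanding `cos ((t - u) √θ)` by the addition formula, the sine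
moment of the even `F` vanishes and the cosine moment is `F̂ (√θ)`. -/

open MeasureTheory

open Set Real

section OddEven

variable {f : ℝ → ℝ}

theorem integral_eq_zero_of_odd (hf : ∀ x, f (-x) = -f x) : ∫ x, f x = 0 := by
  have h := integral_neg_eq_self f volume
  simp only [hf, integral_neg] at h
  linarith

theorem integral_Ioi_add_integral_Ioi_comp_neg (hf : Integrable f) :
    (∫ x in Ioi 0, f x) + ∫ x in Ioi 0, f (-x) = ∫ x, f x := by
  rw [integral_comp_neg_Ioi, neg_zero, ← compl_Ioi]
  exact integral_add_compl measurableSet_Ioi hf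

theorem MeasureTheory.Integrable.mul_cos (hf : Integrable f) (c : ℝ) :
    Integrable fun x => f x * cos (x * c) :=
  hf.mul_bdd (by fun_prop) (ae_of_all _ fun x => by simpa using abs_cos_le_one (x * c))

theorem MeasureTheory.Integrable.mul_sin (hf : Integrable f) (c : ℝ) :
    Integrable fun x => f x * sin (x * c) :=
  hf.mul_bdd (by fun_prop) (ae_of_all _ fun x => by simpa using abs_sin_le_one (x * c))

theorem integral_mul_cos_sub_of_even (hf : Integrable f) (heven : ∀ x, f (-x) = f x)
    (t c : ℝ) : ∫ u, f u * cos ((t - u) * c) = cos (t * c) * ∫ u, f u * cos (u * c) := by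
  have hsin : ∫ u, f u * sin (u * c) = 0 :=
    integral_eq_zero_of_odd fun u => by rw [heven, neg_mul, sin_neg, mul_neg]
  calc ∫ u, f u * cos ((t - u) * c)
      = ∫ u, cos (t * c) * (f u * cos (u * c)) + sin (t * c) * (f u * sin (u * c)) := by
        congr 1 with u
        rw [sub_mul, cos_sub]
        ring
    _ = cos (t * c) * ∫ u, f u * cos (u * c) := by
        rw [integral_add ((hf.mul_cos c).const_mul _) ((hf.mul_sin c).const_mul _),
          integral_const_mul, integral_const_mul, hsin, mul_zero, add_zero]

end OddEven

theorem integral_mul_indicator_Ioi (f g : ℝ → ℝ) :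
    ∫ x, f x * (Ioi 0).indicator g x = ∫ x in Ioi 0, f x * g x := by
  simp_rw [← indicator_mul_right]
  exact integral_indicator measurableSet_Ioi

theorem even_part_heaviside_cos_general (θ : ℝ)
    (F : SchwartzMap ℝ ℝ) (hFeven : ∀ t, F (-t) = F t)
    (hatF : ℝ → ℝ) (hhatF : ∀ ω, hatF ω = ∫ t, F t * Real.cos (ω * t))
    (conv : ℝ → ℝ)
    (hconv : ∀ t, conv t =
      ∫ s, F (t - s) * Set.indicator (Set.Ioi (0 : ℝ)) (fun v => Real.cos (v * Real.sqrt θ)) s) :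
    ∀ t : ℝ, conv t + conv (-t) = hatF (Real.sqrt θ) * Real.cos (t * Real.sqrt θ) := by
  intro t
  set c := √θ
  have hconv_Ioi : ∀ a, conv a = ∫ s in Ioi 0, F (a - s) * cos (s * c) := fun a => by
    rw [hconv, integral_mul_indicator_Ioi]
  have hconv_neg : conv (-t) = ∫ s in Ioi 0, F (t - -s) * cos (-s * c) := by
    rw [hconv_Ioi]
    congr 1 with s
    rw [← hFeven, neg_mul, cos_neg]
    ring_nf
  calc conv t + conv (-t) = ∫ s, F (t - s) * cos (s * c) := by
        rw [hconv_Ioi, hconv_neg, integral_Ioi_add_integral_Ioi_comp_neg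
          ((F.integrable.comp_sub_left t).mul_cos c)]
    _ = ∫ u, F u * cos ((t - u) * c) := by
        simpa only [sub_sub_cancel] using
          integral_sub_left_eq_self (fun u => F u * cos ((t - u) * c)) volume t
    _ = hatF c * cos (t * c) := by
        rw [integral_mul_cos_sub_of_even F.integrable hFeven, hhatF, mul_comm]
        simp only [mul_comm c]

/-- Even-part construction (scalar content of Appendix A): for an even Schwartz `F` with
even Fourier transform `F̂(ω) = ∫ F(t)cos(ωt)dt` and `θ > 0`, the even part
`g_θ(t) = (F ⋆ H·cos(·√θ))(t) + (F ⋆ H·cos(·√θ))(−t)` equals `F̂(√θ)·cos(t√θ)`. -/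
theorem even_part_heaviside_cos (θ : ℝ) (hθ : 0 < θ)
    (F : SchwartzMap ℝ ℝ) (hFeven : ∀ t, F (-t) = F t)
    (hatF : ℝ → ℝ) (hhatF : ∀ ω, hatF ω = ∫ t, F t * Real.cos (ω * t))
    (hhatFeven : ∀ ω, hatF (-ω) = hatF ω)
    (conv : ℝ → ℝ)
    (hconv : ∀ t, conv t =
      ∫ s, F (t - s) * Set.indicator (Set.Ioi (0 : ℝ)) (fun v => Real.cos (v * Real.sqrt θ)) s) :
    ∀ t : ℝ, conv t + conv (-t) = hatF (Real.sqrt θ) * Real.cos (t * Real.sqrt θ) :=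
  even_part_heaviside_cos_general θ F hFeven hatF hhatF conv hconv
end
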